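/- arXiv:2404.18853 — 4 statements merged into one kernel-verified Lean document; each statement's English description precedes it below -/
import Mathlib

section
/- For all σ, τ ∈ ℕ∞^ℕ, the inequality |φ̃(σ) − φ̃(τ)| ≤ ρ^ℕ(σ, τ) holds; in particular, φ̃ : (ℕ∞^ℕ, ρ^ℕ) → [0,1] is Lipschitz with constant 1, hence continuous. -/
open scoped Classical

noncomputable section

/-- `ℕ∞`: the one-point compactification of the positive integers. -/
abbrev NInf : Type := OnePoint ℕ+

/-- View `NInf` as `Option ℕ+`. -/
def toOpt (m : NInf) : Option ℕ+ := m

/-- View `Option ℕ+` as `NInf`. -/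
def ofOpt (o : Option ℕ+) : NInf := o

/-- The reciprocal `1/m`, with the convention `1/∞ = 0`. -/
def rinv (m : NInf) : ℝ :=
  match toOpt m with
  | none => 0
  | some a => 1 / (a : ℝ)

/-- The finite continued fraction `[σ₁, …, σ_k]` computed with the convention `1/∞ = 0`. -/
def cfVal : ℕ → (ℕ → NInf) → ℝ
  | 0, _ => 0
  | k + 1, σ =>
    match toOpt (σ 0) with
    | none => 0
    | some a => 1 / ((a : ℝ) + cfVal k (fun i => σ (i + 1)))

/-- `φ̃(σ) = lim_k [σ₁, …, σ_k]`. -/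
def phiTilde (σ : ℕ → NInf) : ℝ := Filter.limUnder Filter.atTop (fun k => cfVal k σ)

/-- The Gauss map `T̄`, with `T̄(0) = 0`. -/
def Tbar (x : ℝ) : ℝ := if x = 0 then 0 else Int.fract (1 / x)

/-- The first partial quotient `d̄₁(x) = ⌊1/x⌋`, with `d̄₁(0) = ∞`. -/
def dbar (x : ℝ) : NInf := if x = 0 then OnePoint.infty else ((⌊1 / x⌋₊.toPNat' : ℕ+) : NInf)

/-- `f(x) = (d̄₁(x), d̄₂(x), …)`, the sequence of partial quotients (0-indexed:
`cfSeq x k = d̄_{k+1}(x)`). -/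
def cfSeq (x : ℝ) : ℕ → NInf := fun k => dbar (Tbar^[k] x)

/-- `Σ_n`: sequences whose first `n` terms are finite and whose remaining terms are `∞`. -/
def SigmaIdx (n : ℕ) : Set (ℕ → NInf) :=
  {σ | (∀ k < n, σ k ≠ OnePoint.infty) ∧ ∀ k, n ≤ k → σ k = OnePoint.infty}

/-- `Σ_∞ = ℕ^ℕ`: sequences all of whose terms are finite. -/
def SigmaInfSet : Set (ℕ → NInf) := {σ | ∀ k, σ k ≠ OnePoint.infty}

/-- `Σ = Σ_∞ ∪ ⋃ₙ Σ_n` (note `Σ₀ = SigmaIdx 0`). -/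
def SigmaSet : Set (ℕ → NInf) := SigmaInfSet ∪ ⋃ n : ℕ, SigmaIdx n

/-- `σ^{(n)}`: keep the first `n` terms, replace the rest by `∞`. -/
def trunc (n : ℕ) (σ : ℕ → NInf) : ℕ → NInf := fun k => if k < n then σ k else OnePoint.infty

/-- The map `g` forgetting everything after the first `∞`. -/
def gmap (σ : ℕ → NInf) : ℕ → NInf :=
  if h : ∃ k, σ k = OnePoint.infty then trunc (Nat.find h) σ else σ

theorem gmap_mem (σ : ℕ → NInf) : gmap σ ∈ SigmaSet := by
  unfold gmap
  split_ifs with h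
  · refine Or.inr (Set.mem_iUnion.mpr ⟨Nat.find h, ?_, ?_⟩)
    · intro k hk
      simpa [trunc, hk] using Nat.find_min h hk
    · intro k hk
      simp [trunc, Nat.not_lt.mpr hk]
  · exact Or.inl fun k hk => h ⟨k, hk⟩

theorem cfSeq_mem (x : ℝ) : cfSeq x ∈ SigmaSet := by
  by_cases h : ∃ k, Tbar^[k] x = 0
  · refine Or.inr (Set.mem_iUnion.mpr ⟨Nat.find h, ?_, ?_⟩)
    · intro k hk
      have hne : Tbar^[k] x ≠ 0 := Nat.find_min h hk
      simp [cfSeq, dbar, hne]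
    · intro k hk
      have h0 : Tbar^[Nat.find h] x = 0 := Nat.find_spec h
      have : Tbar^[k] x = 0 := by
        have := Function.iterate_add_apply Tbar (k - Nat.find h) (Nat.find h) x
        rw [Nat.sub_add_cancel hk] at this
        rw [this, h0]
        exact Function.iterate_fixed (by simp [Tbar]) _
      simp [cfSeq, dbar, this]
  · refine Or.inl fun k hk => ?_
    have hne : Tbar^[k] x ≠ 0 := fun h0 => h ⟨k, h0⟩
    simp [cfSeq, dbar, hne] at hk

/-- The space `Σ` (as a type). -/
def Sig : Type := {σ : ℕ → NInf // σ ∈ SigmaSet}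

def Sig.mk (σ : ℕ → NInf) (h : σ ∈ SigmaSet) : Sig := ⟨σ, h⟩

def Sig.val (s : Sig) : ℕ → NInf := Subtype.val s

/-- `g`, viewed as a map onto `Σ`. -/
def gS (σ : ℕ → NInf) : Sig := Sig.mk (gmap σ) (gmap_mem σ)

/-- `T_Σ`: the topology on `Σ` coinduced by `g` from the product topology. -/
instance : TopologicalSpace Sig := TopologicalSpace.coinduced gS inferInstance

/-- `f`, viewed as a map into `Σ`. -/
def fS (x : ℝ) : Sig := Sig.mk (cfSeq x) (cfSeq_mem x)

/-- The metric `ρ` on `ℕ∞`. -/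
def rho (m n : NInf) : ℝ := if m = n then 0 else rinv m + rinv n

/-- The metric `ρ^ℕ` on `ℕ∞^ℕ`. -/
def rhoN (σ τ : ℕ → NInf) : ℝ := ∑' k : ℕ, rho (σ k) (τ k) / (Nat.fib (k + 1) : ℝ) ^ 2

/-- Predecessor on `NInf` (finite part). -/
def predNInf (m : NInf) : NInf := ofOpt ((toOpt m).map fun a => a - 1)

/-- The second continued fraction expansion
`(d̄₁(x), …, d̄_{n-1}(x), d̄_n(x) - 1, 1, ∞, ∞, …)` of a rational `x ∈ (0,1)` with
`f(x) ∈ Σ_n`. -/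
def tauOf (x : ℝ) (n : ℕ) : ℕ → NInf := fun k =>
  if k + 1 < n then cfSeq x k
  else if k + 1 = n then predNInf (cfSeq x k)
  else if k = n then ((1 : ℕ+) : NInf)
  else OnePoint.infty

end

/-!
With `j` finite partial quotients in front, the continued fraction `[a₁, …, a_j + s]` is a Möbius
map of the tail `s ≥ 0` with determinant `±1` and denominator `q_j + q_{j-1} s ≥ F_j`, so it
contracts distances by `1 / F_j²`. If `σ` and `τ` first differ at position `j`, their finite
continued fractions differ only in tails `s ≤ 1 / σ_j` and `t ≤ 1 / τ_j`, whence
`|φ̃(σ) - φ̃(τ)| ≤ (1 / σ_j + 1 / τ_j) / F_j² ≤ ρ^ℕ(σ, τ)`; an `∞` before position `j` makes the two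
values equal. Comparing `σ` with its truncation in the same way shows that the finite continued
fractions form a Cauchy sequence, so `φ̃` is a genuine limit. Continuity then follows from
`ρ^ℕ(σ, τ) → 0` as `τ → σ`, by dominated convergence.
-/

open Filter Topology

section ContinuedFractionWithTail

variable {a : ℕ → ℝ}

variable (a) in
/-- `cfWithTail a j s = 1 / (a 0 + 1 / (a 1 + ⋯ + 1 / (a (j - 1) + s)))`. -/
noncomputable def cfWithTail : ℕ → ℝ → ℝ
  | 0 => id
  | j + 1 => fun s => cfWithTail j (1 / (a j + s))

variable (a) in
def continuant : ℕ → ℝ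
  | 0 => 0
  | 1 => 1
  | n + 2 => a n * continuant (n + 1) + continuant n

theorem cfWithTail_succ_eq_one_div_add (j : ℕ) (s : ℝ) :
    cfWithTail a (j + 1) s = 1 / (a 0 + cfWithTail (fun i => a (i + 1)) j s) := by
  induction j generalizing s with
  | zero => rfl
  | succ j ih => exact ih _

theorem cfWithTail_congr {b : ℕ → ℝ} {j : ℕ} (h : ∀ i < j, a i = b i) :
    cfWithTail a j = cfWithTail b j := by
  induction j with
  | zero => rfl
  | succ j ih =>
    funext s
    simp only [cfWithTail, h j j.lt_succ_self, ih fun i hi => h i (Nat.lt_succ_of_lt hi)]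

theorem natCast_fib_le_continuant (ha : ∀ i, 1 ≤ a i) : ∀ n, (Nat.fib n : ℝ) ≤ continuant a n
  | 0 => by simp [continuant]
  | 1 => by simp [continuant]
  | n + 2 => by
    have h₀ := natCast_fib_le_continuant ha n
    have h₁ := natCast_fib_le_continuant ha (n + 1)
    have hfib : (0 : ℝ) ≤ Nat.fib (n + 1) := Nat.cast_nonneg _
    rw [Nat.fib_add_two, Nat.cast_add, continuant]
    nlinarith [ha n]

theorem continuant_nonneg (ha : ∀ i, 1 ≤ a i) (n : ℕ) : 0 ≤ continuant a n :=
  (Nat.cast_nonneg _).trans (natCast_fib_le_continuant ha n)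

/-- `cfWithTail a j` is the Möbius map `s ↦ (p_{j+1} + p_j s) / (q_{j+1} + q_j s)` of determinant
`±1`; this is its distortion identity, stated without the numerators `p`. -/
theorem abs_cfWithTail_sub_mul (ha : ∀ i, 1 ≤ a i) (j : ℕ) {s t : ℝ} (hs : 0 ≤ s) (ht : 0 ≤ t) :
    |cfWithTail a j s - cfWithTail a j t| *
      ((continuant a (j + 1) + continuant a j * s) * (continuant a (j + 1) + continuant a j * t))
      = |s - t| := by
  induction j generalizing s t with
  | zero => simp [cfWithTail, continuant]
  | succ j ih =>
    have hs' : 0 < a j + s := by linarith [ha j]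
    have ht' : 0 < a j + t := by linarith [ha j]
    have hrec := ih (one_div_nonneg.mpr hs'.le) (one_div_nonneg.mpr ht'.le)
    have hden (u : ℝ) (hu : 0 < a j + u) : continuant a (j + 1 + 1) + continuant a (j + 1) * u
        = (continuant a (j + 1) + continuant a j * (1 / (a j + u))) * (a j + u) := by
      rw [continuant]; field_simp; ring
    have hdiff : |1 / (a j + s) - 1 / (a j + t)| * ((a j + s) * (a j + t)) = |s - t| := by
      rw [div_sub_div _ _ hs'.ne' ht'.ne', abs_div, abs_of_pos (mul_pos hs' ht'),
        div_mul_cancel₀ _ (mul_pos hs' ht').ne', ← abs_neg]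
      ring_nf
    rw [hden s hs', hden t ht', ← hdiff, ← hrec]
    simp only [cfWithTail]
    ring

theorem abs_cfWithTail_sub_le (ha : ∀ i, 1 ≤ a i) (j : ℕ) {s t : ℝ} (hs : 0 ≤ s) (ht : 0 ≤ t) :
    |cfWithTail a j s - cfWithTail a j t| ≤ |s - t| / (Nat.fib (j + 1) : ℝ) ^ 2 := by
  have hfib : (1 : ℝ) ≤ Nat.fib (j + 1) := by exact_mod_cast Nat.fib_pos.mpr j.succ_pos
  have hq := natCast_fib_le_continuant ha (j + 1)
  have hq₀ := continuant_nonneg ha j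
  have hden (u : ℝ) (hu : 0 ≤ u) :
      (Nat.fib (j + 1) : ℝ) ≤ continuant a (j + 1) + continuant a j * u := by
    nlinarith [mul_nonneg hq₀ hu]
  rw [le_div_iff₀ (by positivity), ← abs_cfWithTail_sub_mul ha j hs ht, sq]
  exact mul_le_mul_of_nonneg_left
    (mul_le_mul (hden s hs) (hden t ht) (by positivity) (by linarith [hden s hs])) (abs_nonneg _)

end ContinuedFractionWithTail

theorem summable_one_div_fib_succ_sq : Summable fun n : ℕ => 1 / (Nat.fib (n + 1) : ℝ) ^ 2 := by
  have hfib (n : ℕ) : (0 : ℝ) < Nat.fib (n + 1) := by exact_mod_cast Nat.fib_pos.mpr n.succ_pos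
  refine summable_of_ratio_test_tendsto_lt_one (l := Real.goldenConj ^ 2) ?_
    (.of_forall fun n => (one_div_pos.mpr (pow_pos (hfib n) 2)).ne') ?_
  · nlinarith [Real.goldenConj_sq, Real.goldenConj_neg]
  · have h := (tendsto_fib_div_fib_succ_atTop.comp (tendsto_add_atTop_nat 1)).pow 2
    rw [neg_sq] at h
    refine h.congr fun n => ?_
    simp only [Function.comp_apply, Real.norm_eq_abs, abs_of_pos (one_div_pos.mpr
      (pow_pos (hfib _) 2)), div_pow]
    field_simp

@[simp] theorem rinv_infty : rinv OnePoint.infty = 0 := rfl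

@[simp] theorem rinv_coe (a : ℕ+) : rinv a = 1 / (a : ℝ) := rfl

theorem rinv_nonneg (m : NInf) : 0 ≤ rinv m := by
  induction m using OnePoint.rec <;> simp

theorem rinv_le_one (m : NInf) : rinv m ≤ 1 := by
  induction m using OnePoint.rec with
  | infty => simp
  | coe a => simpa using inv_le_one_of_one_le₀ (Nat.one_le_cast.mpr a.pos)

theorem tendsto_rinv_nhds_infty : Tendsto rinv (𝓝 OnePoint.infty) (𝓝 0) := by
  refine OnePoint.tendsto_nhds_infty'.mpr ⟨tendsto_pure_nhds rinv _, ?_⟩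
  rw [coclosedCompact_eq_cocompact, cocompact_eq_cofinite]
  exact (tendsto_one_div_atTop_nhds_zero_nat (𝕜 := ℝ)).comp
    (Nat.cofinite_eq_atTop ▸ PNat.coe_injective.tendsto_cofinite)

theorem rho_nonneg (m n : NInf) : 0 ≤ rho m n := by
  unfold rho
  split_ifs
  exacts [le_rfl, add_nonneg (rinv_nonneg m) (rinv_nonneg n)]

theorem rho_le_two (m n : NInf) : rho m n ≤ 2 := by
  unfold rho
  split_ifs
  · norm_num
  · linarith [rinv_le_one m, rinv_le_one n]

theorem rho_of_ne {m n : NInf} (h : m ≠ n) : rho m n = rinv m + rinv n := if_neg h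

theorem tendsto_rho_nhds_self (m : NInf) : Tendsto (rho m) (𝓝 m) (𝓝 0) := by
  induction m using OnePoint.rec with
  | infty =>
    have hrho : rho OnePoint.infty = rinv := by
      funext n
      by_cases h : OnePoint.infty = n
      · simp [rho, ← h]
      · simp [rho_of_ne h]
    exact hrho ▸ tendsto_rinv_nhds_infty
  | coe a =>
    refine tendsto_const_nhds.congr' (Filter.eventuallyEq_of_mem
      (OnePoint.isOpen_image_coe.mpr (isOpen_discrete {a}) |>.mem_nhds ⟨a, rfl, rfl⟩) ?_)
    rintro _ ⟨b, rfl, rfl⟩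
    simp [rho]

section FiniteContinuedFractions

variable {σ τ : ℕ → NInf}

theorem cfVal_succ_of_eq_infty (k : ℕ) (h : σ 0 = OnePoint.infty) : cfVal (k + 1) σ = 0 := by
  simp [cfVal, toOpt, h]

theorem cfVal_succ_of_eq_coe (k : ℕ) {a : ℕ+} (h : σ 0 = a) :
    cfVal (k + 1) σ = 1 / ((a : ℝ) + cfVal k fun i => σ (i + 1)) := by
  simp [cfVal, toOpt, h]

theorem cfVal_nonneg (k : ℕ) (σ : ℕ → NInf) : 0 ≤ cfVal k σ := by
  induction k generalizing σ with
  | zero => rfl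
  | succ k ih =>
    induction h : σ 0 using OnePoint.rec with
    | infty => rw [cfVal_succ_of_eq_infty k h]
    | coe a =>
      rw [cfVal_succ_of_eq_coe k h]
      have := ih fun i => σ (i + 1)
      positivity

theorem cfVal_le_rinv (k : ℕ) (σ : ℕ → NInf) : cfVal k σ ≤ rinv (σ 0) := by
  cases k with
  | zero => exact rinv_nonneg _
  | succ k =>
    induction h : σ 0 using OnePoint.rec with
    | infty => rw [cfVal_succ_of_eq_infty k h, rinv_infty]
    | coe a =>
      rw [cfVal_succ_of_eq_coe k h, rinv_coe]
      have := cfVal_nonneg k fun i => σ (i + 1)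
      gcongr
      linarith

theorem cfVal_congr {k : ℕ} (h : ∀ i < k, σ i = τ i) : cfVal k σ = cfVal k τ := by
  induction k generalizing σ τ with
  | zero => rfl
  | succ k ih =>
    simp only [cfVal, h 0 k.succ_pos, ih fun i hi => h (i + 1) (Nat.succ_lt_succ hi)]

theorem cfVal_eq_zero_of_eq_infty (k : ℕ) (h : σ 0 = OnePoint.infty) : cfVal k σ = 0 := by
  cases k with
  | zero => rfl
  | succ k => exact cfVal_succ_of_eq_infty k h

theorem cfVal_eq_of_eq_infty {n m : ℕ} (h : σ n = OnePoint.infty) (hnm : n ≤ m) :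
    cfVal m σ = cfVal n σ := by
  induction n generalizing σ m with
  | zero => rw [cfVal_eq_zero_of_eq_infty m h, cfVal_eq_zero_of_eq_infty 0 h]
  | succ n ih =>
    obtain ⟨m, rfl⟩ := Nat.exists_eq_add_of_le' (n.succ_pos.trans_le hnm)
    induction h₀ : σ 0 using OnePoint.rec with
    | infty => rw [cfVal_succ_of_eq_infty m h₀, cfVal_succ_of_eq_infty n h₀]
    | coe a =>
      rw [cfVal_succ_of_eq_coe m h₀, cfVal_succ_of_eq_coe n h₀,
        ih (σ := fun i => σ (i + 1)) h (Nat.le_of_succ_le_succ hnm)]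

theorem cfVal_trunc {k m : ℕ} (hkm : k ≤ m) (σ : ℕ → NInf) : cfVal m (trunc k σ) = cfVal k σ :=
  (cfVal_eq_of_eq_infty (by simp [trunc]) hkm).trans (cfVal_congr fun i hi => by simp [trunc, hi])

/-- The real partial quotients of `σ`; the junk value `1` at `∞` keeps them `≥ 1`. -/
def partialQuot (σ : ℕ → NInf) (i : ℕ) : ℝ := (σ i).elim 1 fun a => (a : ℝ)

theorem one_le_partialQuot (σ : ℕ → NInf) (i : ℕ) : 1 ≤ partialQuot σ i := by
  unfold partialQuot
  induction σ i using OnePoint.rec with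
  | infty => exact le_rfl
  | coe a => exact Nat.one_le_cast.mpr a.pos

theorem cfVal_add_eq_cfWithTail {j : ℕ} (h : ∀ i < j, σ i ≠ OnePoint.infty) (k : ℕ) :
    cfVal (j + k) σ = cfWithTail (partialQuot σ) j (cfVal k fun i => σ (i + j)) := by
  induction j generalizing σ with
  | zero => simp [cfWithTail]
  | succ j ih =>
    obtain ⟨a, ha⟩ := OnePoint.ne_infty_iff_exists.mp (h 0 j.succ_pos)
    have hσ₀ : partialQuot σ 0 = a := by simp [partialQuot, ← ha]
    rw [Nat.add_right_comm, cfVal_succ_of_eq_coe _ ha.symm,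
      ih (fun i hi => h (i + 1) (Nat.succ_lt_succ hi)), cfWithTail_succ_eq_one_div_add, hσ₀]
    rfl

theorem abs_cfVal_sub_cfVal_le {j m : ℕ} (h : ∀ i < j, σ i = τ i) (hjm : j ≤ m) :
    |cfVal m σ - cfVal m τ| ≤ (rinv (σ j) + rinv (τ j)) / (Nat.fib (j + 1) : ℝ) ^ 2 := by
  by_cases hfin : ∀ i < j, σ i ≠ OnePoint.infty
  · obtain ⟨k, rfl⟩ := Nat.exists_eq_add_of_le hjm
    have hτfin : ∀ i < j, τ i ≠ OnePoint.infty := fun i hi => h i hi ▸ hfin i hi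
    have hpq : ∀ i < j, partialQuot σ i = partialQuot τ i := fun i hi => by
      simp only [partialQuot, h i hi]
    rw [cfVal_add_eq_cfWithTail hfin, cfVal_add_eq_cfWithTail hτfin, cfWithTail_congr hpq]
    have hs := cfVal_nonneg k fun i => σ (i + j)
    have ht := cfVal_nonneg k fun i => τ (i + j)
    have hsσ := cfVal_le_rinv k fun i => σ (i + j)
    have htτ := cfVal_le_rinv k fun i => τ (i + j)
    rw [Nat.zero_add] at hsσ htτ
    refine (abs_cfWithTail_sub_le (one_le_partialQuot τ) j hs ht).trans ?_
    gcongr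
    exact abs_sub_le_iff.mpr ⟨by linarith, by linarith⟩
  · push Not at hfin
    obtain ⟨n, hn, hσn⟩ := hfin
    have hτn : τ n = OnePoint.infty := h n hn ▸ hσn
    rw [cfVal_eq_of_eq_infty hσn (hn.le.trans hjm), cfVal_eq_of_eq_infty hτn (hn.le.trans hjm),
      cfVal_congr fun i hi => h i (hi.trans hn), sub_self, abs_zero]
    have := rinv_nonneg (σ j)
    have := rinv_nonneg (τ j)
    positivity

theorem abs_cfVal_sub_cfVal_le_of_le {k m : ℕ} (hkm : k ≤ m) (σ : ℕ → NInf) :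
    |cfVal m σ - cfVal k σ| ≤ 1 / (Nat.fib (k + 1) : ℝ) ^ 2 := by
  rw [← cfVal_trunc hkm σ]
  refine (abs_cfVal_sub_cfVal_le (fun i hi => by simp [trunc, hi]) hkm).trans ?_
  simp only [trunc, lt_irrefl, if_false, rinv_infty, add_zero]
  gcongr
  exact rinv_le_one _

end FiniteContinuedFractions

theorem tendsto_cfVal_phiTilde (σ : ℕ → NInf) :
    Tendsto (fun k => cfVal k σ) atTop (𝓝 (phiTilde σ)) := by
  refine CauchySeq.tendsto_limUnder <| Metric.cauchySeq_iff'.mpr fun ε hε => ?_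
  obtain ⟨N, hN⟩ := (summable_one_div_fib_succ_sq.tendsto_atTop_zero.eventually
    (gt_mem_nhds hε)).exists_forall_of_atTop
  exact ⟨N, fun n hn => (abs_cfVal_sub_cfVal_le_of_le hn σ).trans_lt (hN N le_rfl)⟩

theorem abs_phiTilde_sub_le {σ τ : ℕ → NInf} {j : ℕ} (h : ∀ i < j, σ i = τ i) :
    |phiTilde σ - phiTilde τ| ≤ (rinv (σ j) + rinv (τ j)) / (Nat.fib (j + 1) : ℝ) ^ 2 :=
  le_of_tendsto ((tendsto_cfVal_phiTilde σ).sub (tendsto_cfVal_phiTilde τ)).abs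
    (eventually_atTop.mpr ⟨j, fun _ hm => abs_cfVal_sub_cfVal_le h hm⟩)

theorem rho_div_fib_sq_nonneg (m n : NInf) (k : ℕ) : 0 ≤ rho m n / (Nat.fib (k + 1) : ℝ) ^ 2 :=
  div_nonneg (rho_nonneg m n) (sq_nonneg _)

theorem rho_div_fib_sq_le (m n : NInf) (k : ℕ) :
    rho m n / (Nat.fib (k + 1) : ℝ) ^ 2 ≤ 2 * (1 / (Nat.fib (k + 1) : ℝ) ^ 2) := by
  rw [mul_one_div]
  gcongr
  exact rho_le_two m n

theorem summable_rho_div_fib_sq (σ τ : ℕ → NInf) :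
    Summable fun k => rho (σ k) (τ k) / (Nat.fib (k + 1) : ℝ) ^ 2 :=
  (summable_one_div_fib_succ_sq.mul_left 2).of_nonneg_of_le
    (fun k => rho_div_fib_sq_nonneg _ _ k) fun k => rho_div_fib_sq_le _ _ k

theorem abs_phiTilde_sub_le_rhoN (σ τ : ℕ → NInf) : |phiTilde σ - phiTilde τ| ≤ rhoN σ τ := by
  by_cases heq : σ = τ
  · rw [heq, sub_self, abs_zero]
    exact tsum_nonneg fun k => rho_div_fib_sq_nonneg _ _ k
  have hex : ∃ j, σ j ≠ τ j := Function.ne_iff.mp heq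
  set j := Nat.find hex
  calc |phiTilde σ - phiTilde τ| ≤ (rinv (σ j) + rinv (τ j)) / (Nat.fib (j + 1) : ℝ) ^ 2 :=
        abs_phiTilde_sub_le fun i hi => not_not.mp (Nat.find_min hex hi)
    _ = rho (σ j) (τ j) / (Nat.fib (j + 1) : ℝ) ^ 2 := by rw [rho_of_ne (Nat.find_spec hex)]
    _ ≤ rhoN σ τ := (summable_rho_div_fib_sq σ τ).le_tsum j fun k _ => rho_div_fib_sq_nonneg _ _ k

theorem tendsto_rhoN_nhds_self (σ : ℕ → NInf) : Tendsto (rhoN σ) (𝓝 σ) (𝓝 0) := by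
  have hterm (k : ℕ) : Tendsto (fun τ : ℕ → NInf => rho (σ k) (τ k) / (Nat.fib (k + 1) : ℝ) ^ 2)
      (𝓝 σ) (𝓝 0) := by
    simpa using ((tendsto_rho_nhds_self (σ k)).comp ((continuous_apply k).tendsto σ)).div_const
      ((Nat.fib (k + 1) : ℝ) ^ 2)
  have h := tendsto_tsum_of_dominated_convergence (summable_one_div_fib_succ_sq.mul_left 2)
    hterm (.of_forall fun τ k => by
      rw [Real.norm_eq_abs, abs_of_nonneg (rho_div_fib_sq_nonneg _ _ k)]
      exact rho_div_fib_sq_le _ _ k)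
  rwa [tsum_zero] at h

theorem continuous_phiTilde : Continuous phiTilde :=
  continuous_iff_continuousAt.mpr fun σ => tendsto_iff_dist_tendsto_zero.mpr <|
    squeeze_zero (fun _ => dist_nonneg)
      (fun τ => by rw [Real.dist_eq, abs_sub_comm]; exact abs_phiTilde_sub_le_rhoN σ τ)
      (tendsto_rhoN_nhds_self σ)

/-- `|φ̃(σ) - φ̃(τ)| ≤ ρ^ℕ(σ, τ)` for all `σ, τ`; in particular `φ̃` is
continuous. -/
theorem stmt8 :
    (∀ σ τ : ℕ → NInf, |phiTilde σ - phiTilde τ| ≤ rhoN σ τ) ∧ Continuous phiTilde :=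
  ⟨abs_phiTilde_sub_le_rhoN, continuous_phiTilde⟩
end

section
/- The map g : ℕ∞^ℕ → (Σ, T_Σ) is a closed mapping: the image under g of every closed subset of the product space ℕ∞^ℕ is closed in (Σ, T_Σ). -/
open scoped Classical

/-!
Two sequences have the same image under `g` exactly when they agree at every index before which
neither of them has reached `∞`. This description exhibits the kernel relation of `g` as a closed
subset of `ℕ∞^ℕ × ℕ∞^ℕ`. As `ℕ∞^ℕ` is compact, the `g`-saturation of a closed set `F`, the
projection of this relation intersected with `ℕ∞^ℕ × F`, is closed; since `T_Σ` is coinduced by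
`g`, this says that `g '' F` is closed.
-/

theorem isClosedMap_coinduced_of_isClosed_setOf_eq {X Y : Type*} [TopologicalSpace X]
    [CompactSpace X] (g : X → Y) (hg : IsClosed {p : X × X | g p.1 = g p.2}) :
    @IsClosedMap X Y _ (.coinduced g ‹_›) g := by
  intro F hF
  have hsat : g ⁻¹' (g '' F) = Prod.fst '' ({p : X × X | g p.1 = g p.2} ∩ Prod.snd ⁻¹' F) := by
    ext x
    constructor
    · rintro ⟨y, hyF, hxy⟩
      exact ⟨(x, y), ⟨hxy.symm, hyF⟩, rfl⟩
    · rintro ⟨⟨x, y⟩, ⟨hxy, hyF⟩, rfl⟩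
      exact ⟨y, hyF, hxy.symm⟩
  rw [isClosed_coinduced, hsat]
  exact isClosedMap_fst_of_compactSpace _ (hg.inter (hF.preimage continuous_snd))

theorem gmap_apply (σ : ℕ → NInf) (k : ℕ) :
    gmap σ k = if ∀ j < k, σ j ≠ OnePoint.infty then σ k else OnePoint.infty := by
  by_cases hfin : ∀ j < k, σ j ≠ OnePoint.infty
  · rw [if_pos hfin]
    unfold gmap
    split_ifs with hinf
    · unfold trunc
      split_ifs with hk
      · rfl
      · rcases (not_lt.mp hk).lt_or_eq with hlt | heq
        · exact absurd (Nat.find_spec hinf) (hfin _ hlt)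
        · exact heq ▸ (Nat.find_spec hinf).symm
    · rfl
  · rw [if_neg hfin]
    push Not at hfin
    obtain ⟨j, hjk, hj⟩ := hfin
    unfold gmap
    rw [dif_pos ⟨j, hj⟩]
    exact if_neg (not_lt.mpr ((Nat.find_min' _ hj).trans hjk.le))

theorem gmap_eq_gmap_iff {σ τ : ℕ → NInf} : gmap σ = gmap τ ↔
    ∀ k, (∀ j < k, σ j ≠ OnePoint.infty) → (∀ j < k, τ j ≠ OnePoint.infty) → σ k = τ k := by
  constructor
  · intro h k hσ hτ
    simpa only [gmap_apply, if_pos hσ, if_pos hτ] using congrFun h k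
  · intro h
    have hfin : ∀ k, (∀ j < k, σ j ≠ OnePoint.infty) ↔ ∀ j < k, τ j ≠ OnePoint.infty := by
      intro k
      induction k with
      | zero => simp
      | succ k ih =>
        simp only [Nat.forall_lt_succ_right]
        constructor
        · rintro ⟨hσ, hσk⟩
          exact ⟨ih.mp hσ, h k hσ (ih.mp hσ) ▸ hσk⟩
        · rintro ⟨hτ, hτk⟩
          exact ⟨ih.mpr hτ, (h k (ih.mpr hτ) hτ).symm ▸ hτk⟩
    funext k
    rw [gmap_apply, gmap_apply]
    split_ifs with hσ hτ hτ
    · exact h k hσ hτ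
    · exact absurd ((hfin k).mp hσ) hτ
    · exact absurd ((hfin k).mpr hτ) hσ
    · rfl

theorem isClosed_setOf_gmap_eq :
    IsClosed {p : (ℕ → NInf) × (ℕ → NInf) | gmap p.1 = gmap p.2} := by
  have hopen : ∀ (f : (ℕ → NInf) × (ℕ → NInf) → ℕ → NInf), Continuous f → ∀ k,
      IsOpen {p | ∀ j < k, f p j ≠ OnePoint.infty} := by
    intro f hf k
    simpa only [Set.ofPred_forall, Set.mem_Iio, Function.comp_apply] using
      (Set.finite_Iio k).isOpen_biInter fun j _ =>
        isOpen_ne_fun ((continuous_apply j).comp hf) continuous_const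
  simp only [gmap_eq_gmap_iff, Set.ofPred_forall]
  refine isClosed_iInter fun k => isClosed_imp (hopen _ continuous_fst k) <|
    isClosed_imp (hopen _ continuous_snd k) ?_
  exact isClosed_eq ((continuous_apply k).comp continuous_fst)
    ((continuous_apply k).comp continuous_snd)

/-- `g : ℕ∞^ℕ → (Σ, T_Σ)` is a closed mapping. -/
theorem stmt12 : IsClosedMap gS := by
  refine isClosedMap_coinduced_of_isClosed_setOf_eq gS ?_
  have hker : {p : (ℕ → NInf) × (ℕ → NInf) | gS p.1 = gS p.2} =
      {p | gmap p.1 = gmap p.2} := Set.ext fun p => Subtype.ext_iff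
  exact hker ▸ isClosed_setOf_gmap_eq
end

section
/- Fix n ∈ ℕ and σ ∈ Σ_n, and let Υ_σ = {υ ∈ Σ : υ^{(n)} = σ} be the cylinder set associated with σ. Then the complement Σ \ Υ_σ is a compact subset of (Σ, T_Σ). -/
open scoped Classical

/-
The cylinder `Υ_σ` is determined by finitely many finite coordinates, so its preimage in the
compact space `ℕ∞^ℕ` is open and the preimage of the complement is compact. Since `g` is a
continuous surjection onto `Σ` that preserves the finite coordinates before the first `∞`,
the complement `Σ \ Υ_σ` is the image of that compact set.
-/

theorem OnePoint.isOpen_singleton_of_ne_infty {X : Type*} [TopologicalSpace X]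
    [DiscreteTopology X] {x : OnePoint X} (hx : x ≠ OnePoint.infty) : IsOpen {x} := by
  obtain ⟨y, rfl⟩ := OnePoint.ne_infty_iff_exists.mp hx
  rw [← Set.image_singleton]
  exact OnePoint.isOpen_image_coe.2 (isOpen_discrete _)

theorem trunc_eq_iff {n : ℕ} {σ : ℕ → NInf} (hσ : σ ∈ SigmaIdx n) (τ : ℕ → NInf) :
    trunc n τ = σ ↔ ∀ k < n, τ k = σ k := by
  refine ⟨fun h k hk => by simpa [trunc, hk] using congrFun h k, fun h => funext fun k => ?_⟩
  by_cases hk : k < n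
  · simp [trunc, hk, h k hk]
  · simp [trunc, hk, hσ.2 k (Nat.not_lt.mp hk)]

theorem isOpen_setOf_trunc_eq {n : ℕ} {σ : ℕ → NInf} (hσ : σ ∈ SigmaIdx n) :
    IsOpen {τ : ℕ → NInf | trunc n τ = σ} := by
  simp_rw [trunc_eq_iff hσ, Set.ofPred_forall]
  refine Set.Finite.isOpen_biInter (Set.finite_lt_nat n) fun k hk => ?_
  exact (OnePoint.isOpen_singleton_of_ne_infty (hσ.1 k hk)).preimage
    (continuous_apply (A := fun _ : ℕ => NInf) k)

theorem gmap_apply_of_ne_infty {τ : ℕ → NInf} {k : ℕ} (h : gmap τ k ≠ OnePoint.infty) :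
    gmap τ k = τ k := by
  simp only [gmap] at *
  split_ifs at * with hinf
  · by_cases hk : k < Nat.find hinf <;> simp_all [trunc]
  · rfl

theorem gmap_of_mem {τ : ℕ → NInf} (h : τ ∈ SigmaSet) : gmap τ = τ := by
  unfold gmap
  split_ifs with hinf
  · rcases h with h | h
    · exact absurd (Nat.find_spec hinf) (h _)
    · obtain ⟨m, hm⟩ := Set.mem_iUnion.mp h
      have hfind : Nat.find hinf = m := le_antisymm (Nat.find_le (hm.2 m le_rfl))
        (not_lt.mp fun hlt => hm.1 _ hlt (Nat.find_spec hinf))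
      rw [hfind, trunc_eq_iff hm τ]
      exact fun _ _ => rfl
  · rfl

theorem gS_surjective : Function.Surjective gS :=
  fun υ => ⟨υ.1, Subtype.ext (gmap_of_mem υ.2)⟩

theorem trunc_eq_of_trunc_gmap_eq {n : ℕ} {σ τ : ℕ → NInf} (hσ : σ ∈ SigmaIdx n)
    (h : trunc n (gmap τ) = σ) : trunc n τ = σ := by
  rw [trunc_eq_iff hσ] at h ⊢
  intro k hk
  rw [← h k hk, gmap_apply_of_ne_infty (h k hk ▸ hσ.1 k hk)]

theorem image_gS_setOf_trunc_ne {n : ℕ} {σ : ℕ → NInf} (hσ : σ ∈ SigmaIdx n) :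
    gS '' {τ | trunc n τ ≠ σ} = {υ : Sig | trunc n (Sig.val υ) ≠ σ} := by
  refine Set.Subset.antisymm ?_ fun υ hυ => ?_
  · rintro _ ⟨τ, hτ, rfl⟩ h
    exact hτ (trunc_eq_of_trunc_gmap_eq hσ h)
  · obtain ⟨τ, rfl⟩ := gS_surjective υ
    exact ⟨gmap τ, hυ, Subtype.ext (gmap_of_mem (gmap_mem τ))⟩

theorem stmt14_general (n : ℕ) (σ : ℕ → NInf) (hσ : σ ∈ SigmaIdx n) :
    IsCompact {υ : Sig | trunc n (Sig.val υ) ≠ σ} := by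
  have hcompact : IsCompact {τ : ℕ → NInf | trunc n τ ≠ σ} :=
    (isOpen_setOf_trunc_eq hσ).isClosed_compl.isCompact
  rw [← image_gS_setOf_trunc_ne hσ]
  exact hcompact.image continuous_coinduced_rng

/-- For `n ∈ ℕ` and `σ ∈ Σ_n`, the complement `Σ \ Υ_σ` of the cylinder
set is compact in `(Σ, T_Σ)`. -/
theorem stmt14 (n : ℕ) (hn : 0 < n) (σ : ℕ → NInf) (hσ : σ ∈ SigmaIdx n) :
    IsCompact {υ : Sig | trunc n (Sig.val υ) ≠ σ} :=
  stmt14_general n σ hσ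
end

section
/- The map f : [0,1] → (Σ, T_Σ) (well-defined since f(x) ∈ Σ for every x ∈ [0,1]) is continuous at every irrational point of [0,1] and at the two rational points 0 and 1, where [0,1] carries the Euclidean topology. -/
open scoped Classical

/-!
A set `U ⊆ Σ` is open iff `g⁻¹(U)` is open in the compact space `ℕ∞^ℕ`. At an irrational `x`
every digit `d̄_k` is locally constant, so `f` is continuous even into the product space. At `0`
and `1` the digits are not continuous, but `g` collapses the fibre `{τ | τ₁ = ∞}`, resp.
`{τ | τ₁ = 1, τ₂ = ∞}`, to the single point `f(0)`, resp. `f(1)`. A continuous map out of a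
compact space is closed, so an open set containing such a fibre contains all nearby fibres; it
then suffices that `d̄₁(y) → ∞` as `y → 0⁺` and `(d̄₁(y), d̄₂(y)) → (1, ∞)` as `y → 1⁻`.
-/

open Filter Topology Set OnePoint

lemma Tbar_eq_fract (x : ℝ) : Tbar x = Int.fract (1 / x) := by
  by_cases hx : x = 0 <;> simp [Tbar, hx]

lemma dbar_zero : dbar 0 = ∞ := by
  simp [dbar]

lemma cfSeq_succ (x : ℝ) (k : ℕ) : cfSeq x (k + 1) = cfSeq (Tbar x) k := by
  simp [cfSeq, Function.iterate_succ_apply]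

lemma gmap_eq_trunc {σ : ℕ → NInf} {n : ℕ} (hfin : ∀ k < n, σ k ≠ ∞) (hn : σ n = ∞) :
    gmap σ = trunc n σ := by
  have hex : ∃ k, σ k = ∞ := ⟨n, hn⟩
  have hfind : Nat.find hex = n :=
    le_antisymm (Nat.find_le hn) (not_lt.1 fun h => hfin _ h (Nat.find_spec hex))
  rw [gmap, dif_pos hex, hfind]

lemma gmap_eq_self_of_mem {σ : ℕ → NInf} (hσ : σ ∈ SigmaSet) : gmap σ = σ := by
  rcases hσ with hσ | hσ
  · exact dif_neg fun ⟨k, hk⟩ => hσ k hk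
  · obtain ⟨n, hfin, hinf⟩ := mem_iUnion.1 hσ
    rw [gmap_eq_trunc hfin (hinf n le_rfl)]
    funext k
    by_cases hk : k < n
    · simp [trunc, hk]
    · simp [trunc, hk, hinf k (not_lt.1 hk)]

lemma fS_eq_gS_cfSeq (x : ℝ) : fS x = gS (cfSeq x) :=
  Subtype.ext (gmap_eq_self_of_mem (cfSeq_mem x)).symm

lemma gS_eq_of_eq_infty {σ τ : ℕ → NInf} {n : ℕ} (heq : ∀ k < n, τ k = σ k)
    (hfin : ∀ k < n, σ k ≠ ∞) (hτ : τ n = ∞) (hσ : σ n = ∞) : gS τ = gS σ := by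
  refine Subtype.ext ?_
  change gmap τ = gmap σ
  rw [gmap_eq_trunc (fun k hk => heq k hk ▸ hfin k hk) hτ, gmap_eq_trunc hfin hσ]
  funext k
  by_cases hk : k < n
  · simp [trunc, hk, heq k hk]
  · simp [trunc, hk]

theorem continuousWithinAt_fS_of_tendsto {Y : Type*} [TopologicalSpace Y] [T2Space Y]
    {p : (ℕ → NInf) → Y} (hp : Continuous p) {s : Set ℝ} {x : ℝ}
    (hfiber : ∀ τ, p τ = p (cfSeq x) → gS τ = fS x)
    (hlim : Tendsto (fun y => p (cfSeq y)) (𝓝[s] x) (𝓝 (p (cfSeq x)))) :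
    ContinuousWithinAt fS s x := by
  rw [ContinuousWithinAt, tendsto_nhds]
  intro U hU hxU
  have hV : IsOpen (gS ⁻¹' U) := hU.preimage continuous_coinduced_rng
  have hnear := hp.isClosedMap.eventually_nhds_fiber (p (cfSeq x))
    fun τ hτ => hV.mem_nhds (show gS τ ∈ U from hfiber τ hτ ▸ hxU)
  filter_upwards [hlim hnear] with y hy
  show fS y ∈ U
  rw [fS_eq_gS_cfSeq]
  exact hy _ rfl

lemma eventually_floor_eq {α : Type*} [Ring α] [LinearOrder α] [IsStrictOrderedRing α]
    [FloorRing α] [TopologicalSpace α] [OrderTopology α] {x : α} (hx : x ≠ ⌊x⌋) :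
    ∀ᶠ y in 𝓝 x, ⌊y⌋ = ⌊x⌋ := by
  filter_upwards [Ico_mem_nhds ((Int.floor_le x).lt_of_ne hx.symm) (Int.lt_floor_add_one x)]
    with y hy
  exact Int.floor_eq_iff.2 hy

namespace Irrational

protected lemma one_div {x : ℝ} (hx : Irrational x) : Irrational (1 / x) := by
  rw [_root_.one_div]; exact hx.inv

lemma eventually_dbar_eq {x : ℝ} (hx : Irrational x) : ∀ᶠ y in 𝓝 x, dbar y = dbar x := by
  have hcont : ContinuousAt (fun y : ℝ => 1 / y) x :=
    continuousAt_const.div continuousAt_id hx.ne_zero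
  filter_upwards [hcont.eventually (eventually_floor_eq (hx.one_div.ne_int _)),
    eventually_ne_nhds hx.ne_zero] with y hfloor hy
  simp only [dbar, if_neg hy, if_neg hx.ne_zero, ← Int.floor_toNat, hfloor]

lemma continuousAt_Tbar {x : ℝ} (hx : Irrational x) : ContinuousAt Tbar x := by
  rw [show Tbar = fun y => Int.fract (1 / y) from funext Tbar_eq_fract]
  exact (continuousAt_fract (hx.one_div.ne_int _)).comp
    (continuousAt_const.div continuousAt_id hx.ne_zero)

lemma Tbar {x : ℝ} (hx : Irrational x) : Irrational (Tbar x) := by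
  rw [Tbar_eq_fract, Int.fract]
  exact hx.one_div.sub_intCast _

lemma continuousAt_cfSeq {x : ℝ} (hx : Irrational x) : ContinuousAt cfSeq x := by
  rw [continuousAt_pi]
  intro k
  induction k generalizing x with
  | zero => exact tendsto_const_nhds.congr' (hx.eventually_dbar_eq.mono fun y hy => hy.symm)
  | succ k ih =>
    simp only [cfSeq_succ]
    exact (ih hx.Tbar).comp hx.continuousAt_Tbar

lemma continuousAt_fS {x : ℝ} (hx : Irrational x) : ContinuousAt fS x := by
  rw [show fS = gS ∘ cfSeq from funext fS_eq_gS_cfSeq]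
  exact continuous_coinduced_rng.continuousAt.comp hx.continuousAt_cfSeq

end Irrational

lemma tendsto_dbar_nhdsGE_zero : Tendsto dbar (𝓝[≥] 0) (𝓝 ∞) := by
  rw [← nhdsGT_sup_nhdsWithin_singleton, nhdsWithin_singleton, tendsto_sup]
  refine ⟨?_, dbar_zero ▸ tendsto_pure_nhds dbar 0⟩
  have htoPNat : Tendsto Nat.toPNat' atTop atTop :=
    tendsto_atTop_atTop.2 fun b => ⟨b, fun a ha => by
      rw [← PNat.coe_le_coe, Nat.toPNat'_coe, if_pos (b.pos.trans_le ha)]; exact ha⟩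
  have hcoe : Tendsto ((↑) : ℕ+ → NInf) atTop (𝓝 ∞) := by
    have h := tendsto_coe_infty (X := ℕ+)
    rw [coclosedCompact_eq_cocompact, cocompact_eq_cofinite] at h
    exact h.mono_left atTop_le_cofinite
  have hinv : Tendsto (fun y : ℝ => 1 / y) (𝓝[>] 0) atTop := by
    simpa only [one_div] using tendsto_inv_nhdsGT_zero
  refine (hcoe.comp (htoPNat.comp (tendsto_nat_floor_atTop.comp hinv))).congr' ?_
  filter_upwards [self_mem_nhdsWithin] with y (hy : 0 < y)
  simp [dbar, hy.ne']

lemma tendsto_one_div_nhdsLE_one : Tendsto (fun y : ℝ => 1 / y) (𝓝[≤] 1) (𝓝[≥] 1) := by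
  refine tendsto_nhdsWithin_iff.2 ⟨?_, ?_⟩
  · have hcont : ContinuousAt (fun y : ℝ => 1 / y) 1 :=
      continuousAt_const.div continuousAt_id one_ne_zero
    simpa using hcont.tendsto.mono_left nhdsWithin_le_nhds
  · filter_upwards [self_mem_nhdsWithin, nhdsWithin_le_nhds (Ioi_mem_nhds one_pos)]
      with y hy1 hy0
    exact one_le_one_div (a := y) hy0 hy1

lemma eventually_dbar_eq_one : ∀ᶠ y in 𝓝[≤] (1 : ℝ), dbar y = dbar 1 := by
  have hfloor := tendsto_floor_right_pure (α := ℝ) 1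
  rw [Int.cast_one] at hfloor
  replace hfloor := hfloor.comp tendsto_one_div_nhdsLE_one
  filter_upwards [tendsto_pure.1 hfloor, nhdsWithin_le_nhds (Ioi_mem_nhds one_pos)]
    with y hfloor (hy0 : 0 < y)
  rw [Function.comp_apply] at hfloor
  rw [dbar, dbar, if_neg hy0.ne', if_neg one_ne_zero, ← Int.floor_toNat, hfloor]
  norm_num

lemma tendsto_Tbar_nhdsLE_one : Tendsto Tbar (𝓝[≤] 1) (𝓝[≥] 0) := by
  rw [show Tbar = fun y => Int.fract (1 / y) from funext Tbar_eq_fract]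
  have hfract := tendsto_fract_right (α := ℝ) 1
  rw [Int.cast_one] at hfract
  exact hfract.comp tendsto_one_div_nhdsLE_one

lemma continuousWithinAt_fS_zero : ContinuousWithinAt fS (Ici 0) 0 := by
  refine continuousWithinAt_fS_of_tendsto (continuous_apply 0) (fun τ hτ => ?_) ?_
  · rw [fS_eq_gS_cfSeq]
    exact gS_eq_of_eq_infty (n := 0) (by simp) (by simp) (hτ.trans dbar_zero) dbar_zero
  · change Tendsto dbar _ (𝓝 (dbar 0))
    rw [dbar_zero]
    exact tendsto_dbar_nhdsGE_zero

lemma continuousWithinAt_fS_one : ContinuousWithinAt fS (Iic 1) 1 := by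
  have hTbar1 : Tbar 1 = 0 := by simp [Tbar]
  refine continuousWithinAt_fS_of_tendsto ((continuous_apply 0).prodMk (continuous_apply 1))
    (fun τ hτ => ?_) ?_
  · obtain ⟨h0, h1⟩ := Prod.mk.inj hτ
    have hinf : cfSeq 1 1 = ∞ := by rw [cfSeq_succ, hTbar1]; exact dbar_zero
    rw [fS_eq_gS_cfSeq]
    refine gS_eq_of_eq_infty (n := 1) (fun k hk => ?_) (fun k hk => ?_) (h1.trans hinf) hinf
    · rwa [Nat.lt_one_iff.1 hk]
    · simp [Nat.lt_one_iff.1 hk, cfSeq, dbar]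
  · refine (tendsto_const_nhds.congr' ?_).prodMk_nhds ?_
    · exact eventually_dbar_eq_one.mono fun y hy => hy.symm
    · change Tendsto (fun y => dbar (Tbar y)) _ (𝓝 (dbar (Tbar 1)))
      rw [hTbar1, dbar_zero]
      exact tendsto_dbar_nhdsGE_zero.comp tendsto_Tbar_nhdsLE_one

theorem stmt16_general (x : ℝ)
    (hcase : Irrational x ∨ x = 0 ∨ x = 1) :
    ContinuousWithinAt fS (Set.Icc (0 : ℝ) 1) x := by
  rcases hcase with hx | rfl | rfl
  · exact hx.continuousAt_fS.continuousWithinAt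
  · exact continuousWithinAt_fS_zero.mono Icc_subset_Ici_self
  · exact continuousWithinAt_fS_one.mono Icc_subset_Iic_self

/-- `f : [0,1] → (Σ, T_Σ)` is continuous at every irrational point of
`[0,1]` and at the two rational points `0` and `1`. -/
theorem stmt16 (x : ℝ) (hx : x ∈ Set.Icc (0 : ℝ) 1)
    (hcase : Irrational x ∨ x = 0 ∨ x = 1) :
    ContinuousWithinAt fS (Set.Icc (0 : ℝ) 1) x :=
  stmt16_general x hcase
end
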